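/- arXiv:2502.16364 — 5 statements merged into one kernel-verified Lean document; each statement's English description precedes it below -/
import Mathlib

section
/- Conversely to the previous statement: with the same setup, fix α ∈ (0,1), κ > 0, and let w* be the outer maximizer in the EW-ES problem, i.e., w* ∈ argmax_{w'} sup_{P ∈ A} [R(P) + κ·(w' + (1/α)·E[min(W_P − w', 0)])]. If P* maximizes the linear-shortfall objective R(P) + (κ/α)·E[min(W_P − w*, 0)] over P ∈ A, then (P*, w*) attains the supremum of the EW-ES objective sup_{w'} sup_{P} [R(P) + κ·(w' + (1/α)·E[min(W_P − w', 0)])]. -/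
open MeasureTheory

lemma integ_min {Ω : Type*} [MeasurableSpace Ω] (μ : Measure Ω) [IsFiniteMeasure μ]
    (f : Ω → ℝ) (hf : Integrable f μ) (c : ℝ) :
    Integrable (fun ω => min (f ω - c) 0) μ :=
  Integrable.inf (hf.sub (integrable_const c)) (integrable_const 0)

lemma split_int {Ω : Type*} [MeasurableSpace Ω] (μ : Measure Ω) [IsProbabilityMeasure μ]
    (f : Ω → ℝ) (hf : Integrable f μ) (c a : ℝ) :
    ∫ ω, (c + a * min (f ω - c) 0) ∂μ
      = c + a * ∫ ω, min (f ω - c) 0 ∂μ := by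
  rw [integral_add (integrable_const c) (((integ_min μ f hf c)).const_mul a),
    integral_const, integral_const_mul]
  simp

/-- Converse direction: let `V w'` be the (attained) value
`max_P J(P, w')` of the EW-ES objective for fixed `w'`, and let `w*` maximize
`V`.  If `P*` maximizes the linear-shortfall objective
`R(P) + (κ/α) E[min(W_P - w*, 0)]`, then `(P*, w*)` attains the supremum of
the EW-ES objective. -/
theorem ewls_max_implies_ewes_max
    {Ω : Type*} [MeasurableSpace Ω] (μ : Measure Ω) [IsProbabilityMeasure μ]
    {A : Type*} [Nonempty A]
    (W : A → Ω → ℝ) (hW : ∀ P, Integrable (W P) μ) (R : A → ℝ)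
    (α κ : ℝ) (hα : α ∈ Set.Ioo (0 : ℝ) 1) (hκ : 0 < κ)
    (V : ℝ → ℝ)
    (hV : ∀ w' : ℝ, IsGreatest
      {v : ℝ | ∃ P : A,
        v = R P + κ * ∫ ω, (w' + (1 / α) * min (W P ω - w') 0) ∂μ} (V w'))
    (wstar : ℝ) (hwstar : ∀ w' : ℝ, V w' ≤ V wstar)
    (Pstar : A)
    (hPstar : ∀ P : A,
      R P + (κ / α) * ∫ ω, min (W P ω - wstar) 0 ∂μ
        ≤ R Pstar + (κ / α) * ∫ ω, min (W Pstar ω - wstar) 0 ∂μ) :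
    ∀ (P : A) (w' : ℝ),
      R P + κ * ∫ ω, (w' + (1 / α) * min (W P ω - w') 0) ∂μ
        ≤ R Pstar + κ * ∫ ω, (wstar + (1 / α) * min (W Pstar ω - wstar) 0) ∂μ := by
  intro P w'
  have h1 : R P + κ * ∫ ω, (w' + (1 / α) * min (W P ω - w') 0) ∂μ ≤ V w' :=
    (hV w').2 ⟨P, rfl⟩
  have h2 := hwstar w'
  obtain ⟨P0, hP0⟩ := (hV wstar).1
  -- rewrite J(Q, wstar) in split form
  have key : ∀ Q : A,
      R Q + κ * ∫ ω, (wstar + (1 / α) * min (W Q ω - wstar) 0) ∂μ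
        = R Q + κ * wstar + (κ / α) * ∫ ω, min (W Q ω - wstar) 0 ∂μ := by
    intro Q
    rw [split_int μ (W Q) (hW Q) wstar (1 / α)]
    ring
  have h3 : V wstar ≤ R Pstar + κ * ∫ ω, (wstar + (1 / α) * min (W Pstar ω - wstar) 0) ∂μ := by
    rw [hP0, key P0, key Pstar]
    have := hPstar P0
    linarith
  linarith
end

section
/- Let H_ES be the set of controls P ∈ A such that P solves the EW-ES problem sup_{P} sup_{w'} [R(P) + κ(w' + (1/α)E[min(W_P − w',0)])] for some α ∈ (0,1) and κ > 0, and let H_LS be the set of P ∈ A solving sup_P [R(P) + k̂·E[min(W_P − w, 0)]] for some w ∈ ℝ and k̂ > 0. Then H_ES ⊆ H_LS. -/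
open MeasureTheory

/-- The set of EW-ES optimal controls (over all `(α,κ) ∈ (0,1)×(0,∞)`, with
suprema attained) is contained in the set of EW-LS optimal controls
(over all `(w, k̂) ∈ ℝ×(0,∞)`). -/
theorem HES_subset_HLS
    {Ω : Type*} [MeasurableSpace Ω] (μ : Measure Ω) [IsProbabilityMeasure μ]
    {A : Type*} [Nonempty A]
    (W : A → Ω → ℝ) (hW : ∀ P, Integrable (W P) μ) (R : A → ℝ) :
    {P : A | ∃ α κ : ℝ, α ∈ Set.Ioo (0 : ℝ) 1 ∧ 0 < κ ∧
        ∃ wstar : ℝ, ∀ (P' : A) (w' : ℝ),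
          R P' + κ * ∫ ω, (w' + (1 / α) * min (W P' ω - w') 0) ∂μ
            ≤ R P + κ * ∫ ω, (wstar + (1 / α) * min (W P ω - wstar) 0) ∂μ}
    ⊆ {P : A | ∃ w khat : ℝ, 0 < khat ∧
        ∀ P' : A,
          R P' + khat * ∫ ω, min (W P' ω - w) 0 ∂μ
            ≤ R P + khat * ∫ ω, min (W P ω - w) 0 ∂μ} := by
  rintro P ⟨α, κ, ⟨hα0, hα1⟩, hκ, wstar, hopt⟩
  refine ⟨wstar, κ / α, div_pos hκ hα0, fun P' => ?_⟩
  have hint : ∀ Q : A, Integrable (fun ω => min (W Q ω - wstar) 0) μ := fun Q =>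
    ((hW Q).sub (integrable_const wstar)).inf (integrable_const 0)
  have key := hopt P' wstar
  have e : ∀ Q : A,
      ∫ ω, (wstar + (1 / α) * min (W Q ω - wstar) 0) ∂μ
        = wstar + (1 / α) * ∫ ω, min (W Q ω - wstar) 0 ∂μ := by
    intro Q
    rw [integral_add (integrable_const _) ((hint Q).const_mul _),
      integral_const, integral_const_mul]
    simp
  rw [e P, e P'] at key
  have hκα : κ * (1 / α) = κ / α := by field_simp
  rw [mul_add, mul_add, ← mul_assoc, ← mul_assoc, hκα] at key
  linarith
end

section
/- Assume that for each (w, k̂) with k̂ > 0, every solution P*(w, k̂) of the linear-shortfall problem sup_P [R(P) + k̂·E[min(W_P − w, 0)]] yields a well-defined probability α*_{k̂}(w) = P(W_{P*} < w) ∈ (0,1), and that the map w ↦ α*_{k̂}(w) is injective on the domain where it lies in (0,1). Then any solution of the linear-shortfall problem with parameters (w, k̂) also solves the EW-ES problem with parameters (α, κ) = (α*_{k̂}(w), α*_{k̂}(w)·k̂). -/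
open MeasureTheory

variable {Ω : Type*} [MeasurableSpace Ω] {A : Type*}

/-- The scalarized EW-ES objective `J(P, w') = R(P) + κ E[w' + (1/α) min(W_P - w', 0)]`. -/
noncomputable def JES (μ : Measure Ω) (W : A → Ω → ℝ) (R : A → ℝ)
    (α κ : ℝ) (P : A) (w' : ℝ) : ℝ :=
  R P + κ * ∫ ω, (w' + (1 / α) * min (W P ω - w') 0) ∂μ

/-- `P` solves the EW-ES problem `sup_P sup_{w'} J(P, w')` (supremum attained). -/
def solvesES (μ : Measure Ω) (W : A → Ω → ℝ) (R : A → ℝ)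
    (α κ : ℝ) (P : A) : Prop :=
  ∃ wstar : ℝ, ∀ (P' : A) (w' : ℝ),
    JES μ W R α κ P' w' ≤ JES μ W R α κ P wstar

/-- `P` solves the EW-LS problem with threshold `w` and coefficient `k̂`. -/
def solvesLS (μ : Measure Ω) (W : A → Ω → ℝ) (R : A → ℝ)
    (w khat : ℝ) (P : A) : Prop :=
  ∀ P' : A,
    R P' + khat * ∫ ω, min (W P' ω - w) 0 ∂μ
      ≤ R P + khat * ∫ ω, min (W P ω - w) 0 ∂μ

/-!
Take an EW-ES solution `Q` for `(α, κ) = (α*_{k̂}(w), α*_{k̂}(w) k̂)`. By the forward direction,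
`Q` solves EW-LS at its VaR `w_Q` with coefficient `κ / α = k̂` and `P(W_Q < w_Q) = α`, so
`α*_{k̂}(w_Q) = α*_{k̂}(w)` and injectivity gives `w_Q = w`. At a fixed threshold `w'` the EW-ES
objective is `κ w'` plus the EW-LS objective with coefficient `κ / α`; hence at `w' = w` the
LS-optimal `P*` scores at least as much as `Q`, which dominates every pair `(P', w')`.
-/

noncomputable def lsObjective (μ : Measure Ω) (W : A → Ω → ℝ) (R : A → ℝ)
    (w khat : ℝ) (P : A) : ℝ :=
  R P + khat * ∫ ω, min (W P ω - w) 0 ∂μ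

section

variable {μ : Measure Ω} {W : A → Ω → ℝ} {R : A → ℝ}

theorem JES_eq_add_lsObjective [IsProbabilityMeasure μ] {P : A} (hW : Integrable (W P) μ)
    {α : ℝ} (hα : α ≠ 0) (κ w' : ℝ) :
    JES μ W R α κ P w' = κ * w' + lsObjective μ W R w' (κ / α) P := by
  have hmin : Integrable (fun ω => min (W P ω - w') 0) μ :=
    (hW.sub (integrable_const w')).inf (integrable_zero _ _ _)
  rw [JES, lsObjective, integral_add (integrable_const w') (hmin.const_mul _), integral_const,
    integral_const_mul, probReal_univ, one_smul]
  field_simp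
  ring

theorem JES_le_of_solvesLS_of_JES_le [IsProbabilityMeasure μ] (hW : ∀ P, Integrable (W P) μ)
    {α κ w : ℝ} (hα : α ≠ 0) {Q P : A}
    (hQ : ∀ (P' : A) (w' : ℝ), JES μ W R α κ P' w' ≤ JES μ W R α κ Q w)
    (hP : solvesLS μ W R w (κ / α) P) (P' : A) (w' : ℝ) :
    JES μ W R α κ P' w' ≤ JES μ W R α κ P w :=
  calc JES μ W R α κ P' w' ≤ JES μ W R α κ Q w := hQ P' w'
    _ = κ * w + lsObjective μ W R w (κ / α) Q := JES_eq_add_lsObjective (hW Q) hα κ w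
    _ ≤ κ * w + lsObjective μ W R w (κ / α) P := (add_le_add_iff_left _).2 (hP Q)
    _ = JES μ W R α κ P w := (JES_eq_add_lsObjective (hW P) hα κ w).symm

end

theorem ewls_solution_solves_ewes_general
    (μ : Measure Ω) [IsProbabilityMeasure μ]
    (W : A → Ω → ℝ) (hW : ∀ P, Integrable (W P) μ) (R : A → ℝ)
    (αstar : ℝ → ℝ → ℝ)
    (hdef : ∀ (khat w : ℝ) (P : A), 0 < khat → solvesLS μ W R w khat P →
      (μ {ω | W P ω < w}).toReal = αstar khat w)
    (hinj : ∀ khat w₁ w₂ : ℝ, 0 < khat →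
      αstar khat w₁ ∈ Set.Ioo (0 : ℝ) 1 → αstar khat w₂ ∈ Set.Ioo (0 : ℝ) 1 →
      αstar khat w₁ = αstar khat w₂ → w₁ = w₂)
    (hES_attain : ∀ α κ : ℝ, α ∈ Set.Ioo (0 : ℝ) 1 → 0 < κ →
      ∃ P : A, solvesES μ W R α κ P)
    (hforward : ∀ (α κ : ℝ) (P : A) (w₀ : ℝ),
      α ∈ Set.Ioo (0 : ℝ) 1 → 0 < κ →
      (∀ (P' : A) (w' : ℝ), JES μ W R α κ P' w' ≤ JES μ W R α κ P w₀) →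
      (μ {ω | W P ω < w₀}).toReal = α ∧ solvesLS μ W R w₀ (κ / α) P)
    (w khat : ℝ) (hkhat : 0 < khat)
    (hα : αstar khat w ∈ Set.Ioo (0 : ℝ) 1)
    (Pstar : A) (hPstar : solvesLS μ W R w khat Pstar) :
    solvesES μ W R (αstar khat w) (αstar khat w * khat) Pstar := by
  set α := αstar khat w
  have hα₀ : α ≠ 0 := hα.1.ne'
  have hκα : α * khat / α = khat := by field_simp
  have hκ : 0 < α * khat := mul_pos hα.1 hkhat
  obtain ⟨Q, wQ, hQ⟩ := hES_attain α (α * khat) hα hκ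
  obtain ⟨hQ_var, hQ_LS⟩ := hforward α (α * khat) Q wQ hα hκ hQ
  rw [hκα] at hQ_LS
  have hαQ : αstar khat wQ = α := by rw [← hdef khat wQ Q hkhat hQ_LS, hQ_var]
  obtain rfl : wQ = w := hinj khat wQ w hkhat (hαQ ▸ hα) hα hαQ
  exact ⟨wQ, JES_le_of_solvesLS_of_JES_le hW hα₀ hQ (by rwa [hκα])⟩

/-- If `α*_{k̂}(w)` is well defined on LS solutions, lies in `(0,1)`, is injective
in `w`, EW-ES solutions exist, and the forward direction (ES ⇒ LS at the VaR
threshold) holds, then any LS solution with parameters `(w, k̂)` solves the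
EW-ES problem with parameters `(α*_{k̂}(w), α*_{k̂}(w)·k̂)`. -/
theorem ewls_solution_solves_ewes
    (μ : Measure Ω) [IsProbabilityMeasure μ] [Nonempty A]
    (W : A → Ω → ℝ) (hW : ∀ P, Integrable (W P) μ) (R : A → ℝ)
    (αstar : ℝ → ℝ → ℝ)
    (hdef : ∀ (khat w : ℝ) (P : A), 0 < khat → solvesLS μ W R w khat P →
      (μ {ω | W P ω < w}).toReal = αstar khat w)
    (hinj : ∀ khat w₁ w₂ : ℝ, 0 < khat →
      αstar khat w₁ ∈ Set.Ioo (0 : ℝ) 1 → αstar khat w₂ ∈ Set.Ioo (0 : ℝ) 1 →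
      αstar khat w₁ = αstar khat w₂ → w₁ = w₂)
    (hES_attain : ∀ α κ : ℝ, α ∈ Set.Ioo (0 : ℝ) 1 → 0 < κ →
      ∃ P : A, solvesES μ W R α κ P)
    (hforward : ∀ (α κ : ℝ) (P : A) (w₀ : ℝ),
      α ∈ Set.Ioo (0 : ℝ) 1 → 0 < κ →
      (∀ (P' : A) (w' : ℝ), JES μ W R α κ P' w' ≤ JES μ W R α κ P w₀) →
      (μ {ω | W P ω < w₀}).toReal = α ∧ solvesLS μ W R w₀ (κ / α) P)
    (w khat : ℝ) (hkhat : 0 < khat)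
    (hα : αstar khat w ∈ Set.Ioo (0 : ℝ) 1)
    (Pstar : A) (hPstar : solvesLS μ W R w khat Pstar) :
    solvesES μ W R (αstar khat w) (αstar khat w * khat) Pstar :=
  ewls_solution_solves_ewes_general μ W hW R αstar hdef hinj hES_attain hforward w khat hkhat hα
    Pstar hPstar
end

section
/- Let W be an integrable random variable with continuous strictly increasing CDF F. Then the function h(w') = w' + (1/α)·E[min(W − w', 0)] is maximized exactly at w* = F⁻¹(α), i.e., the argmax of the Rockafellar–Uryasev auxiliary function is the α-quantile (VaR) of W. -/
/-!
Write `g c = 𝔼[min (W - c) 0]`. For `a ≤ b` the increment `min (W - b) 0 - min (W - a) 0` lies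
between `-(b - a)·1{W ≤ b}` and `-(b - a)·1{W ≤ a}`, so `g` has "slopes" between `-F b` and `-F a`
on `[a, b]`, and `h` has slopes between `1 - F b / α` and `1 - F a / α`. Since `1 - F / α` is
strictly decreasing and vanishes exactly at `F⁻¹(α)`, `h` increases up to `F⁻¹(α)` and decreases
after it, strictly on each side.
-/

open MeasureTheory Set

def HasSlopeBounds (h s : ℝ → ℝ) : Prop :=
  ∀ ⦃a b⦄, a ≤ b → (b - a) * s b ≤ h b - h a ∧ h b - h a ≤ (b - a) * s a

namespace HasSlopeBounds

variable {h s : ℝ → ℝ}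

theorem le_of_eq_zero (hhs : HasSlopeBounds h s) {x : ℝ} (hx : s x = 0) (y : ℝ) : h y ≤ h x := by
  rcases le_total y x with hyx | hxy
  · have := (hhs hyx).1
    rw [hx, mul_zero] at this
    linarith
  · have := (hhs hxy).2
    rw [hx, mul_zero] at this
    linarith

theorem eq_of_forall_le (hhs : HasSlopeBounds h s) (hs : StrictAnti s) {x : ℝ} (hx : s x = 0)
    {y : ℝ} (hy : ∀ z, h z ≤ h y) : y = x := by
  by_contra hne
  rcases lt_or_gt_of_ne hne with hyx | hxy
  · obtain ⟨m, hym, hmx⟩ := exists_between hyx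
    have hsm : 0 < s m := hx ▸ hs hmx
    have := (hhs hym.le).1
    nlinarith [hy m]
  · obtain ⟨m, hxm, hmy⟩ := exists_between hxy
    have hsm : s m < 0 := hx ▸ hs hxm
    have := (hhs hmy.le).2
    nlinarith [hy m]

end HasSlopeBounds

theorem integral_indicator_one₀ {X : Type*} [MeasurableSpace X] {μ : Measure X} {s : Set X}
    (hs : NullMeasurableSet s μ) : ∫ x, s.indicator 1 x ∂μ = μ.real s := by
  rw [integral_indicator₀ hs]
  simp

theorem min_sub_zero_le_sub_mul_indicator {a b : ℝ} (hab : a ≤ b) (x : ℝ) :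
    min (x - b) 0 ≤ min (x - a) 0 - (b - a) * (Iic a).indicator 1 x := by
  by_cases hxa : x ≤ a
  · simp [indicator_of_mem (show x ∈ Iic a from hxa), min_eq_left (by linarith : x - a ≤ 0),
      min_eq_left (by linarith : x - b ≤ 0)]
  · simp only [indicator_of_notMem (show x ∉ Iic a from hxa), mul_zero, sub_zero]
    exact min_le_min (by linarith) le_rfl

theorem sub_mul_indicator_le_min_sub_zero {a b : ℝ} (hab : a ≤ b) (x : ℝ) :
    min (x - a) 0 - (b - a) * (Iic b).indicator 1 x ≤ min (x - b) 0 := by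
  by_cases hxb : x ≤ b
  · simp only [indicator_of_mem (show x ∈ Iic b from hxb), Pi.one_apply, mul_one,
      min_eq_left (by linarith : x - b ≤ 0)]
    linarith [min_le_left (x - a) 0]
  · simp [indicator_of_notMem (show x ∉ Iic b from hxb), min_eq_right (by linarith : 0 ≤ x - a),
      min_eq_right (by linarith : 0 ≤ x - b)]

section LowerPartialMoment

variable {Ω : Type*} [MeasurableSpace Ω] {μ : Measure Ω} [IsFiniteMeasure μ] {W : Ω → ℝ}

theorem integrable_min_sub_zero (hW : Integrable W μ) (c : ℝ) :
    Integrable (fun ω => min (W ω - c) 0) μ :=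
  (hW.sub (integrable_const c)).inf (integrable_const 0)

theorem integrable_indicator_le (hW : Integrable W μ) (c : ℝ) :
    Integrable ({ω | W ω ≤ c}.indicator (1 : Ω → ℝ)) μ :=
  (integrable_const 1).indicator₀ (nullMeasurableSet_le hW.aemeasurable aemeasurable_const)

theorem integral_min_sub_zero_sub_mul_indicator (hW : Integrable W μ) (a c d : ℝ) :
    ∫ ω, (min (W ω - a) 0 - d * {ω | W ω ≤ c}.indicator 1 ω) ∂μ
      = ∫ ω, min (W ω - a) 0 ∂μ - d * μ.real {ω | W ω ≤ c} := by
  have hc : NullMeasurableSet {ω | W ω ≤ c} μ :=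
    nullMeasurableSet_le hW.aemeasurable aemeasurable_const
  rw [integral_sub (integrable_min_sub_zero hW a) ((integrable_indicator_le hW c).const_mul d),
    integral_const_mul, integral_indicator_one₀ hc]

theorem integral_min_sub_zero_le (hW : Integrable W μ) {a b : ℝ} (hab : a ≤ b) :
    ∫ ω, min (W ω - b) 0 ∂μ ≤ ∫ ω, min (W ω - a) 0 ∂μ - (b - a) * μ.real {ω | W ω ≤ a} := by
  rw [← integral_min_sub_zero_sub_mul_indicator hW]
  exact integral_mono (integrable_min_sub_zero hW b)
    ((integrable_min_sub_zero hW a).sub ((integrable_indicator_le hW a).const_mul _))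
    fun ω => min_sub_zero_le_sub_mul_indicator hab (W ω)

theorem integral_min_sub_zero_ge (hW : Integrable W μ) {a b : ℝ} (hab : a ≤ b) :
    ∫ ω, min (W ω - a) 0 ∂μ - (b - a) * μ.real {ω | W ω ≤ b} ≤ ∫ ω, min (W ω - b) 0 ∂μ := by
  rw [← integral_min_sub_zero_sub_mul_indicator hW]
  exact integral_mono
    ((integrable_min_sub_zero hW a).sub ((integrable_indicator_le hW b).const_mul _))
    (integrable_min_sub_zero hW b) fun ω => sub_mul_indicator_le_min_sub_zero hab (W ω)

theorem hasSlopeBounds_rockafellarUryasev (hW : Integrable W μ) {α : ℝ} (hα : 0 < α) :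
    HasSlopeBounds (fun w => w + (1 / α) * ∫ ω, min (W ω - w) 0 ∂μ)
      (fun w => 1 - μ.real {ω | W ω ≤ w} / α) := by
  intro a b hab
  have hα' : 0 ≤ 1 / α := by positivity
  have hlow := mul_le_mul_of_nonneg_left (integral_min_sub_zero_ge hW hab) hα'
  have hup := mul_le_mul_of_nonneg_left (integral_min_sub_zero_le hW hab) hα'
  constructor <;> dsimp only <;> simp only [div_eq_inv_mul] at hlow hup ⊢ <;> linarith

end LowerPartialMoment

theorem ru_argmax_is_VaR_general
    {Ω : Type*} [MeasurableSpace Ω] (μ : Measure Ω) [IsProbabilityMeasure μ]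
    (W : Ω → ℝ) (hW : Integrable W μ)
    (F : ℝ → ℝ) (hF : ∀ x, F x = (μ {ω | W ω ≤ x}).toReal)
    (hFmono : StrictMono F)
    (α : ℝ) (hα : α ∈ Set.Ioo (0 : ℝ) 1)
    (wstar : ℝ) (hq : F wstar = α) :
    (∀ w' : ℝ,
      w' + (1 / α) * ∫ ω, min (W ω - w') 0 ∂μ
        ≤ wstar + (1 / α) * ∫ ω, min (W ω - wstar) 0 ∂μ)
    ∧ (∀ w' : ℝ,
        (∀ v : ℝ, v + (1 / α) * ∫ ω, min (W ω - v) 0 ∂μ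
          ≤ w' + (1 / α) * ∫ ω, min (W ω - w') 0 ∂μ) → w' = wstar) := by
  have hslope := hasSlopeBounds_rockafellarUryasev hW hα.1
  have hcdf : (fun w => 1 - μ.real {ω | W ω ≤ w} / α) = fun w => 1 - F w / α := by
    funext w
    rw [hF, measureReal_def]
  rw [hcdf] at hslope
  have hanti : StrictAnti fun w => 1 - F w / α := fun a b hab =>
    sub_lt_sub_left (div_lt_div_of_pos_right (hFmono hab) hα.1) 1
  have hzero : 1 - F wstar / α = 0 := by rw [hq, div_self hα.1.ne', sub_self]
  exact ⟨hslope.le_of_eq_zero hzero, fun w' hw' => hslope.eq_of_forall_le hanti hzero hw'⟩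

/-- For `W` integrable with continuous strictly increasing CDF `F`, the
Rockafellar–Uryasev auxiliary function `h(w') = w' + (1/α)E[min(W - w', 0)]`
is maximized exactly at the α-quantile `w*` (the unique point with `F(w*) = α`). -/
theorem ru_argmax_is_VaR
    {Ω : Type*} [MeasurableSpace Ω] (μ : Measure Ω) [IsProbabilityMeasure μ]
    (W : Ω → ℝ) (hW : Integrable W μ)
    (F : ℝ → ℝ) (hF : ∀ x, F x = (μ {ω | W ω ≤ x}).toReal)
    (hFcont : Continuous F) (hFmono : StrictMono F)
    (α : ℝ) (hα : α ∈ Set.Ioo (0 : ℝ) 1)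
    (wstar : ℝ) (hq : F wstar = α) :
    (∀ w' : ℝ,
      w' + (1 / α) * ∫ ω, min (W ω - w') 0 ∂μ
        ≤ wstar + (1 / α) * ∫ ω, min (W ω - wstar) 0 ∂μ)
    ∧ (∀ w' : ℝ,
        (∀ v : ℝ, v + (1 / α) * ∫ ω, min (W ω - v) 0 ∂μ
          ≤ w' + (1 / α) * ∫ ω, min (W ω - w') 0 ∂μ) → w' = wstar) :=
  ru_argmax_is_VaR_general μ W hW F hF hFmono α hα wstar hq
end

section
/- For an integrable random variable W with continuous CDF and α ∈ (0,1), the maximum value of h(w') = w' + (1/α)E[min(W − w', 0)] over w' ∈ ℝ equals CVaR_α(W) := E[W | W ≤ q_α], where q_α is the α-quantile of W, provided P(W ≤ q_α) = α. -/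
/-!
Comparing the integrands pointwise, `min (x - w) 0 - min (x - q) 0 ≤ (q - w) · 1_{x ≤ q}`, so
integrating against `μ` with `μ {W ≤ q} = α` gives `h w ≤ h q` for every `w`: the supremum is
attained at the quantile. There `min (W - q) 0 = (W - q) · 1_{W ≤ q}`, whence
`h q = q + (E[W · 1_{W ≤ q}] - q α) / α = E[W · 1_{W ≤ q}] / α`.
-/

open MeasureTheory Set

lemma min_sub_zero_sub_min_sub_zero_le (x w q : ℝ) :
    min (x - w) 0 - min (x - q) 0 ≤ (Iic q).indicator (fun _ => q - w) x := by
  by_cases hx : x ≤ q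
  · rw [indicator_of_mem (mem_Iic.2 hx), min_eq_left (by linarith : x - q ≤ 0)]
    linarith [min_le_left (x - w) 0]
  · rw [indicator_of_notMem (by simpa using hx), min_eq_right (by linarith : 0 ≤ x - q)]
    linarith [min_le_right (x - w) 0]

lemma min_sub_zero_eq_indicator_sub_indicator (x q : ℝ) :
    min (x - q) 0 = (Iic q).indicator id x - (Iic q).indicator (fun _ => q) x := by
  by_cases hx : x ≤ q
  · simp [indicator_of_mem (mem_Iic.2 hx), min_eq_left (by linarith : x - q ≤ 0)]
  · simp [indicator_of_notMem (show x ∉ Iic q by simpa using hx),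
      min_eq_right (by linarith : 0 ≤ x - q)]

namespace MeasureTheory

variable {Ω : Type*} [MeasurableSpace Ω] {μ : Measure Ω} [IsFiniteMeasure μ] {X : Ω → ℝ}

lemma Integrable.min_sub_const_zero (hX : Integrable X μ) (w : ℝ) :
    Integrable (fun ω => min (X ω - w) 0) μ :=
  (hX.sub (integrable_const w)).inf (integrable_zero Ω ℝ μ)

lemma integral_min_sub_zero_le (hX : Integrable X μ) (w q : ℝ) :
    ∫ ω, min (X ω - w) 0 ∂μ ≤ ∫ ω, min (X ω - q) 0 ∂μ + (q - w) * μ.real {ω | X ω ≤ q} := by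
  have hs : NullMeasurableSet {ω | X ω ≤ q} μ :=
    hX.aestronglyMeasurable.nullMeasurableSet_le aestronglyMeasurable_const
  have hmono : ∫ ω, (min (X ω - w) 0 - min (X ω - q) 0) ∂μ
      ≤ ∫ ω, {ω | X ω ≤ q}.indicator (fun _ => q - w) ω ∂μ :=
    integral_mono ((hX.min_sub_const_zero w).sub (hX.min_sub_const_zero q))
    ((integrable_const (q - w)).indicator₀ hs)
    fun ω => min_sub_zero_sub_min_sub_zero_le (X ω) w q
  rw [integral_sub (hX.min_sub_const_zero w) (hX.min_sub_const_zero q), integral_indicator₀ hs,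
    setIntegral_const, smul_eq_mul] at hmono
  linarith

lemma integral_min_sub_zero (hX : Integrable X μ) (q : ℝ) :
    ∫ ω, min (X ω - q) 0 ∂μ = ∫ ω, {ω | X ω ≤ q}.indicator X ω ∂μ - q * μ.real {ω | X ω ≤ q} := by
  have hs : NullMeasurableSet {ω | X ω ≤ q} μ :=
    hX.aestronglyMeasurable.nullMeasurableSet_le aestronglyMeasurable_const
  calc ∫ ω, min (X ω - q) 0 ∂μ
      = ∫ ω, ({ω | X ω ≤ q}.indicator X ω - {ω | X ω ≤ q}.indicator (fun _ => q) ω) ∂μ :=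
        integral_congr_ae (ae_of_all _ fun ω => min_sub_zero_eq_indicator_sub_indicator (X ω) q)
    _ = ∫ ω, {ω | X ω ≤ q}.indicator X ω ∂μ - q * μ.real {ω | X ω ≤ q} := by
        rw [integral_sub (hX.indicator₀ hs) ((integrable_const q).indicator₀ hs),
          integral_indicator₀ hs (f := fun _ => q), setIntegral_const, smul_eq_mul, mul_comm]

/-- The Rockafellar–Uryasev objective. -/
noncomputable def ruObjective (μ : Measure Ω) (X : Ω → ℝ) (α w : ℝ) : ℝ :=
  w + (1 / α) * ∫ ω, min (X ω - w) 0 ∂μ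

variable {α q : ℝ}

lemma ruObjective_le_ruObjective_of_measureReal_le_eq (hX : Integrable X μ) (hα : 0 < α)
    (hq : μ.real {ω | X ω ≤ q} = α) (w : ℝ) :
    ruObjective μ X α w ≤ ruObjective μ X α q := by
  have hbound := integral_min_sub_zero_le hX w q
  rw [hq] at hbound
  have hscaled := mul_le_mul_of_nonneg_left hbound (one_div_nonneg.2 hα.le)
  rw [mul_add, show 1 / α * ((q - w) * α) = q - w by field_simp] at hscaled
  unfold ruObjective
  linarith

lemma ruObjective_eq_of_measureReal_le_eq (hX : Integrable X μ) (hα : α ≠ 0)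
    (hq : μ.real {ω | X ω ≤ q} = α) :
    ruObjective μ X α q = (∫ ω, {ω | X ω ≤ q}.indicator X ω ∂μ) / α := by
  rw [ruObjective, integral_min_sub_zero hX, hq]
  field_simp
  ring

lemma iSup_ruObjective_of_measureReal_le_eq (hX : Integrable X μ) (hα : 0 < α)
    (hq : μ.real {ω | X ω ≤ q} = α) :
    ⨆ w, ruObjective μ X α w = (∫ ω, {ω | X ω ≤ q}.indicator X ω ∂μ) / α := by
  have hle := ruObjective_le_ruObjective_of_measureReal_le_eq hX hα hq
  rw [← ruObjective_eq_of_measureReal_le_eq hX hα.ne' hq]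
  exact le_antisymm (ciSup_le hle) (le_ciSup ⟨_, forall_mem_range.2 hle⟩ q)

end MeasureTheory

theorem ru_sup_eq_cvar_general
    {Ω : Type*} [MeasurableSpace Ω] (μ : Measure Ω) [IsProbabilityMeasure μ]
    (W : Ω → ℝ) (hW : Integrable W μ)
    (α : ℝ) (hα : α ∈ Set.Ioo (0 : ℝ) 1)
    (qα : ℝ) (hq : (μ {ω | W ω ≤ qα}).toReal = α) :
    (⨆ w' : ℝ, (w' + (1 / α) * ∫ ω, min (W ω - w') 0 ∂μ))
      = (∫ ω, (if W ω ≤ qα then W ω else 0) ∂μ) / α := by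
  have hcvar := iSup_ruObjective_of_measureReal_le_eq hW hα.1 hq
  simp only [ruObjective, indicator_apply, mem_ofPred_eq] at hcvar
  exact hcvar

/-- The supremum of the Rockafellar–Uryasev auxiliary function equals the
conditional expectation `CVaR_α(W) = E[W · 1_{W ≤ q_α}]/α` at the α-quantile. -/
theorem ru_sup_eq_cvar
    {Ω : Type*} [MeasurableSpace Ω] (μ : Measure Ω) [IsProbabilityMeasure μ]
    (W : Ω → ℝ) (hW : Integrable W μ)
    (α : ℝ) (hα : α ∈ Set.Ioo (0 : ℝ) 1)
    (hcont : ∀ x : ℝ, μ {ω | W ω = x} = 0)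
    (qα : ℝ) (hq : (μ {ω | W ω ≤ qα}).toReal = α) :
    (⨆ w' : ℝ, (w' + (1 / α) * ∫ ω, min (W ω - w') 0 ∂μ))
      = (∫ ω, (if W ω ≤ qα then W ω else 0) ∂μ) / α :=
  ru_sup_eq_cvar_general μ W hW α hα qα hq
end
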